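/- arXiv:1706.09682 — 2 statements merged into one kernel-verified Lean document; each statement's English description precedes it below -/
import Mathlib

section
/- For every q with 0 ≤ q ≤ dim K − 1, both i and −i are eigenvalues of the up-Grover walk U_q^up on ℓ²(E(X_q)); and for every q with 1 ≤ q ≤ dim K, both i and −i are eigenvalues of the down-Grover walk U_q^down on ℓ²(E(Y_q)). -/
open scoped BigOperators

/-- The set of oriented `q`-simplices of a simplicial complex, together with the
orientation-reversal involution `bar` (writing `τ̄` for `bar τ`). -/
structure OrientedSet where
  K : Type
  bar : K → K
  bar_invol : ∀ τ, bar (bar τ) = τ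
  bar_ne : ∀ τ, bar τ ≠ τ

/-- The data of an up graph (`mult = 2(q+1)`) or a down graph (`mult = 2`) on the set of
oriented `q`-simplices: the sign function `η` (extended by `0` off the edge set, so that
`(τ₁, τ₂)` is an edge iff `eta τ₁ τ₂ ≠ 0`), the degree function (`deg_X`, resp. `deg_Y`),
and local finiteness; the degree of a vertex `τ` in the graph is `mult * deg τ`. -/
structure GroverStructure (O : OrientedSet) where
  eta : O.K → O.K → ℝ
  eta_symm : ∀ τ₁ τ₂, eta τ₁ τ₂ = eta τ₂ τ₁
  eta_vals : ∀ τ₁ τ₂, eta τ₁ τ₂ = 0 ∨ eta τ₁ τ₂ = 1 ∨ eta τ₁ τ₂ = -1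
  eta_bar_left : ∀ τ₁ τ₂, eta (O.bar τ₁) τ₂ = - eta τ₁ τ₂
  eta_self : ∀ τ, eta τ τ = 0
  eta_bar_self : ∀ τ, eta τ (O.bar τ) = 0
  deg : O.K → ℕ
  deg_pos : ∀ τ, 0 < deg τ
  deg_bar : ∀ τ, deg (O.bar τ) = deg τ
  mult : ℕ
  nbhdFinite : ∀ τ, {τ' | eta τ τ' ≠ 0}.Finite
  nbhd_card : ∀ τ, (nbhdFinite τ).toFinset.card = mult * deg τ

namespace GroverStructure

variable {O : OrientedSet} (Y : GroverStructure O)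

/-- `(τ₁, τ₂)` is an oriented edge of the up/down graph. -/
def Edge (τ₁ τ₂ : O.K) : Prop := Y.eta τ₁ τ₂ ≠ 0

/-- The normalization constant `(mult * deg τ)^(-1/2)`. -/
noncomputable def c (τ : O.K) : ℂ := ((Real.sqrt (Y.mult * Y.deg τ) : ℝ) : ℂ)⁻¹

/-- The operator `d : ℓ²(E) → ℓ²(K)`; elements of `ℓ²(E)` are represented as
functions on `K × K` (supported on the set of edges). -/
noncomputable def d (g : O.K × O.K → ℂ) : O.K → ℂ :=
  fun τ => Y.c τ * ∑ᶠ τ' ∈ {τ' | Y.eta τ τ' ≠ 0}, g (τ, τ')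

/-- The adjoint `d* : ℓ²(K) → ℓ²(E)`. -/
noncomputable def dstar (f : O.K → ℂ) : O.K × O.K → ℂ :=
  fun p => if Y.eta p.1 p.2 ≠ 0 then Y.c p.1 * f p.1 else 0

/-- The shift operator `(S g)(τ₁,τ₂) = η(τ₁,τ₂) • g(τ₂,τ₁)`. -/
noncomputable def shift (g : O.K × O.K → ℂ) : O.K × O.K → ℂ :=
  fun p => (Y.eta p.1 p.2 : ℂ) * g (p.2, p.1)

/-- The discriminant operator `D = d ∘ S ∘ d*`. -/
noncomputable def disc (f : O.K → ℂ) : O.K → ℂ := Y.d (Y.shift (Y.dstar f))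

/-- The Grover walk `U = S (2 d* d − I)`. -/
noncomputable def walk (g : O.K × O.K → ℂ) : O.K × O.K → ℂ :=
  Y.shift (fun p => 2 * Y.dstar (Y.d g) p - g p)

/-- Membership in `ℓ²(E)`: square summable and supported on the edge set. -/
def MemEdge (g : O.K × O.K → ℂ) : Prop :=
  Memℓp g 2 ∧ ∀ p : O.K × O.K, ¬ Y.Edge p.1 p.2 → g p = 0

end GroverStructure

/-- The orthogonal projection of `ℓ²(K_q)` onto the cochain space
`C^q(K,ℂ) = {f : f(τ̄) = -f(τ)}`. -/
noncomputable def projC (O : OrientedSet) (f : O.K → ℂ) : O.K → ℂ :=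
  fun τ => (f τ - f (O.bar τ)) / 2

/-!
For a finitely supported `f` on oriented simplices with `f τ̄ = f τ`, put `a = d* f` and
`b = S a`. Then `d a = f`, while `d b = 0` because `η` changes sign under `τ' ↦ τ̄'` and `f`
does not; also `S b = a` since `η² = 1` on edges. Hence `U a = S a = b` and `U b = -S b = -a`,
so `U` rotates the plane spanned by `a` and `b`, and `a - μ b` is an eigenvector of `U` for
either root `μ = ±i` of `μ² = -1`. It is nonzero because `d (a - μ b) = f`.
-/

namespace OrientedSet

variable (O : OrientedSet)

lemma exists_bar_invariant_finite_support_ne_zero [Nonempty O.K] :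
    ∃ f : O.K → ℂ, f ≠ 0 ∧ f.support.Finite ∧ ∀ τ, f (O.bar τ) = f τ := by
  classical
  obtain ⟨τ₀⟩ := ‹Nonempty O.K›
  let g : O.K → ℂ := Pi.single τ₀ 1
  refine ⟨fun τ => g τ + g (O.bar τ), fun h => ?_, ?_,
    fun τ => by simp only [O.bar_invol, add_comm]⟩
  · have := congrFun h τ₀
    simp [g, O.bar_ne τ₀] at this
  · refine (Set.toFinite {τ₀, O.bar τ₀}).subset fun τ hτ => ?_
    by_contra hnot
    simp only [Set.mem_insert_iff, Set.mem_singleton_iff, not_or] at hnot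
    have : O.bar τ ≠ τ₀ := fun h => hnot.2 (by rw [← h, O.bar_invol])
    simp [g, Pi.single_apply, hnot.1, this] at hτ

end OrientedSet

namespace GroverStructure

variable {O : OrientedSet} (Y : GroverStructure O)

lemma eta_bar_right (τ τ' : O.K) : Y.eta τ (O.bar τ') = - Y.eta τ τ' := by
  rw [Y.eta_symm, Y.eta_bar_left, Y.eta_symm]

lemma eta_mul_self_of_edge {τ τ' : O.K} (h : Y.Edge τ τ') : Y.eta τ τ' * Y.eta τ τ' = 1 := by
  rcases Y.eta_vals τ τ' with h' | h' | h' <;> simp_all [Edge]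

lemma c_bar (τ : O.K) : Y.c (O.bar τ) = Y.c τ := by
  simp [c, Y.deg_bar]

lemma c_mul_c_mul_mult_deg (hm : 0 < Y.mult) (τ : O.K) :
    Y.c τ * Y.c τ * (Y.mult * Y.deg τ) = 1 := by
  have hpos : (0 : ℝ) < Y.mult * Y.deg τ := by have := Y.deg_pos τ; positivity
  have h : (Real.sqrt (Y.mult * Y.deg τ))⁻¹ * (Real.sqrt (Y.mult * Y.deg τ))⁻¹
      * (Y.mult * Y.deg τ) = (1 : ℝ) := by
    rw [← mul_inv, Real.mul_self_sqrt hpos.le, inv_mul_cancel₀ hpos.ne']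
  have h' := congrArg ((↑) : ℝ → ℂ) h
  push_cast at h'
  simpa [c] using h'

lemma d_eq_sum (g : O.K × O.K → ℂ) (τ : O.K) :
    Y.d g τ = Y.c τ * ∑ τ' ∈ (Y.nbhdFinite τ).toFinset, g (τ, τ') := by
  rw [d, ← finsum_mem_coe_finset, Set.Finite.coe_toFinset]

lemma d_add_mul (g h : O.K × O.K → ℂ) (μ : ℂ) :
    Y.d (fun p => g p + μ * h p) = fun τ => Y.d g τ + μ * Y.d h τ := by
  funext τ
  simp only [d_eq_sum, Finset.sum_add_distrib, ← Finset.mul_sum]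
  ring

lemma dstar_eq_zero_of_not_edge (f : O.K → ℂ) {p : O.K × O.K} (hp : ¬ Y.Edge p.1 p.2) :
    Y.dstar f p = 0 :=
  if_neg hp

lemma shift_eq_zero_of_not_edge (g : O.K × O.K → ℂ) {p : O.K × O.K} (hp : ¬ Y.Edge p.1 p.2) :
    Y.shift g p = 0 := by
  simp [shift, show Y.eta p.1 p.2 = 0 from not_not.1 hp]

lemma shift_shift {g : O.K × O.K → ℂ} (hg : ∀ p : O.K × O.K, ¬ Y.Edge p.1 p.2 → g p = 0) :
    Y.shift (Y.shift g) = g := by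
  funext p
  by_cases hp : Y.Edge p.1 p.2
  · have h := Y.eta_mul_self_of_edge hp
    simp only [shift, Y.eta_symm p.2 p.1]
    rw [← mul_assoc, ← Complex.ofReal_mul, h, Complex.ofReal_one, one_mul]
  · rw [Y.shift_eq_zero_of_not_edge _ hp, hg p hp]

lemma d_dstar (hm : 0 < Y.mult) (f : O.K → ℂ) : Y.d (Y.dstar f) = f := by
  funext τ
  have hsum : ∑ τ' ∈ (Y.nbhdFinite τ).toFinset, Y.dstar f (τ, τ')
      = ∑ τ' ∈ (Y.nbhdFinite τ).toFinset, Y.c τ * f τ :=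
    Finset.sum_congr rfl fun τ' hτ' => if_pos ((Y.nbhdFinite τ).mem_toFinset.1 hτ')
  rw [d_eq_sum, hsum, Finset.sum_const, Y.nbhd_card, nsmul_eq_mul]
  push_cast
  linear_combination f τ * Y.c_mul_c_mul_mult_deg hm τ

/-- `τ' ↦ τ̄'` pairs off the neighbours of `τ`, and the summand of `(D f)(τ)` is odd under it. -/
lemma disc_eq_zero_of_bar_invariant {f : O.K → ℂ} (hf : ∀ τ, f (O.bar τ) = f τ) :
    Y.disc f = 0 := by
  funext τ
  rw [disc, d_eq_sum, Pi.zero_apply, mul_eq_zero]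
  right
  have hmem : ∀ τ', τ' ∈ (Y.nbhdFinite τ).toFinset → O.bar τ' ∈ (Y.nbhdFinite τ).toFinset := by
    intro τ' hτ'
    simpa [Y.eta_bar_right] using hτ'
  refine Finset.sum_involution (fun τ' _ => O.bar τ') (fun τ' _ => ?_)
    (fun τ' _ _ => O.bar_ne τ') hmem (fun τ' _ => O.bar_invol τ')
  simp only [shift, dstar, Y.eta_symm _ τ, Y.eta_bar_right, neg_ne_zero, Y.c_bar, hf]
  split_ifs <;> push_cast <;> ring

noncomputable def rotationVector (f : O.K → ℂ) (μ : ℂ) : O.K × O.K → ℂ :=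
  fun p => Y.dstar f p - μ * Y.shift (Y.dstar f) p

variable {Y}

lemma d_rotationVector (hm : 0 < Y.mult) {f : O.K → ℂ} (hf : ∀ τ, f (O.bar τ) = f τ) (μ : ℂ) :
    Y.d (Y.rotationVector f μ) = f := by
  have h := Y.d_add_mul (Y.dstar f) (Y.shift (Y.dstar f)) (-μ)
  simp only [neg_mul, ← sub_eq_add_neg] at h
  unfold rotationVector
  rw [h, Y.d_dstar hm, ← disc, Y.disc_eq_zero_of_bar_invariant hf]
  simp

lemma walk_rotationVector (hm : 0 < Y.mult) {f : O.K → ℂ} (hf : ∀ τ, f (O.bar τ) = f τ)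
    {μ : ℂ} (hμ : μ ^ 2 = -1) :
    Y.walk (Y.rotationVector f μ) = fun p => μ * Y.rotationVector f μ p := by
  have hSS := Y.shift_shift fun _ => Y.dstar_eq_zero_of_not_edge f
  funext ⟨τ₁, τ₂⟩
  rw [walk, d_rotationVector hm hf]
  have hS := congrFun hSS (τ₁, τ₂)
  simp only [shift, rotationVector] at hS ⊢
  linear_combination (Y.eta τ₁ τ₂ : ℂ) * Y.dstar f (τ₂, τ₁) * hμ + μ * hS

lemma rotationVector_ne_zero (hm : 0 < Y.mult) {f : O.K → ℂ} (hf : ∀ τ, f (O.bar τ) = f τ)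
    (μ : ℂ) (hf0 : f ≠ 0) : Y.rotationVector f μ ≠ 0 := by
  intro h
  have := d_rotationVector hm hf μ
  rw [h] at this
  exact hf0 (this.symm.trans (funext fun τ => by simp [d]))

lemma memEdge_rotationVector {f : O.K → ℂ} (hf : f.support.Finite) (μ : ℂ) :
    Y.MemEdge (Y.rotationVector f μ) := by
  have hdstar : (Y.dstar f).support.Finite := by
    refine (hf.prod (hf.biUnion fun τ _ => Y.nbhdFinite τ)).subset fun p hp => ?_
    have hedge : Y.eta p.1 p.2 ≠ 0 := fun h => hp (Y.dstar_eq_zero_of_not_edge f (not_not.2 h))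
    have hfp : f p.1 ≠ 0 := fun h => hp (by simp [dstar, hedge, h])
    exact ⟨hfp, Set.mem_biUnion hfp hedge⟩
  have hshift : (Y.shift (Y.dstar f)).support.Finite :=
    (hdstar.preimage Prod.swap_injective.injOn).subset fun p hp h =>
      hp (by simp [shift, show Y.dstar f (p.2, p.1) = 0 from h])
  refine ⟨(memℓp_zero ((hdstar.union hshift).subset fun p hp => ?_)).of_exponent_ge bot_le,
    fun p hp => ?_⟩
  · by_contra hnot
    simp only [Set.mem_union, Function.mem_support, not_or, not_not] at hnot
    exact hp (by simp [rotationVector, hnot.1, hnot.2])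
  · simp [rotationVector, Y.dstar_eq_zero_of_not_edge f hp, Y.shift_eq_zero_of_not_edge _ hp]

theorem exists_walk_eigenvector [Nonempty O.K] (hm : 0 < Y.mult) {μ : ℂ} (hμ : μ ^ 2 = -1) :
    ∃ φ : O.K × O.K → ℂ, Y.MemEdge φ ∧ φ ≠ 0 ∧ Y.walk φ = fun p => μ * φ p := by
  obtain ⟨f, hf0, hfin, hf⟩ := O.exists_bar_invariant_finite_support_ne_zero
  exact ⟨Y.rotationVector f μ, memEdge_rotationVector hfin μ, rotationVector_ne_zero hm hf μ hf0,
    walk_rotationVector hm hf hμ⟩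

end GroverStructure

/-- Both `i` and `-i` are eigenvalues of the up-Grover walk
`U_q^up = S^up (2 d_{X_q}* d_{X_q} - I)` on `ℓ²(E(X_q))`, and both `i` and `-i` are
eigenvalues of the down-Grover walk `U_q^down = S^down (2 d_{Y_q}* d_{Y_q} - I)`
on `ℓ²(E(Y_q))`. -/
theorem up_down_walks_have_eigenvalues_pm_I (O : OrientedSet) (q : ℕ) (hne : Nonempty O.K)
    (X : GroverStructure O) (hXup : X.mult = 2 * (q + 1))
    (Y : GroverStructure O) (hYdown : Y.mult = 2) :
    (∃ φ : O.K × O.K → ℂ, X.MemEdge φ ∧ φ ≠ 0 ∧ X.walk φ = fun p => Complex.I * φ p) ∧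
    (∃ φ : O.K × O.K → ℂ, X.MemEdge φ ∧ φ ≠ 0 ∧ X.walk φ = fun p => - Complex.I * φ p) ∧
    (∃ φ : O.K × O.K → ℂ, Y.MemEdge φ ∧ φ ≠ 0 ∧ Y.walk φ = fun p => Complex.I * φ p) ∧
    (∃ φ : O.K × O.K → ℂ, Y.MemEdge φ ∧ φ ≠ 0 ∧ Y.walk φ = fun p => - Complex.I * φ p) := by
  have hmX : 0 < X.mult := by omega
  have hmY : 0 < Y.mult := by omega
  have hnegI : (-Complex.I) ^ 2 = -1 := by rw [neg_sq, Complex.I_sq]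
  exact ⟨X.exists_walk_eigenvector hmX Complex.I_sq, X.exists_walk_eigenvector hmX hnegI,
    Y.exists_walk_eigenvector hmY Complex.I_sq, Y.exists_walk_eigenvector hmY hnegI⟩
end

section
/- For every q ≥ 1 (with q + 1 ≤ dim K), the up discriminant D_q^up does not have −1 as an eigenvalue: there is no nonzero g ∈ ℓ²(K_q) with D_q^up g = −g. -/
open scoped BigOperators

/-- The incidence signs `sgn(σ,τ)` between oriented simplices of two consecutive
dimensions (`Olow` models `K_q`, `Ohigh` models `K_{q+1}`): `sgn σ τ ∈ {±1}` if the
underlying simplex `[τ]` is a face of `[σ]`, and `sgn σ τ = 0` otherwise. -/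
structure SgnPair (Olow Ohigh : OrientedSet) where
  sgn : Ohigh.K → Olow.K → ℝ
  sgn_vals : ∀ σ τ, sgn σ τ = 0 ∨ sgn σ τ = 1 ∨ sgn σ τ = -1
  sgn_bar_left : ∀ σ τ, sgn (Ohigh.bar σ) τ = - sgn σ τ
  sgn_bar_right : ∀ σ τ, sgn σ (Olow.bar τ) = - sgn σ τ
  facesFinite : ∀ σ, {τ | sgn σ τ ≠ 0}.Finite
  cofacesFinite : ∀ τ, {σ | sgn σ τ ≠ 0}.Finite

namespace SgnPair

variable {Olow Ohigh : OrientedSet} (P : SgnPair Olow Ohigh)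

/-- The coboundary operator `(δ_q f)(σ) = (1/2) ∑_{τ ∈ K_q} sgn(σ,τ) f(τ)`. -/
noncomputable def delta (f : Olow.K → ℂ) : Ohigh.K → ℂ :=
  fun σ => (1 / 2 : ℂ) * ∑ᶠ τ, (P.sgn σ τ : ℂ) * f τ

/-- The adjoint coboundary `(δ_q* g)(τ) = (1/2) ∑_{σ ∈ K_{q+1}} sgn(σ,τ) g(σ)`. -/
noncomputable def deltaStar (g : Ohigh.K → ℂ) : Olow.K → ℂ :=
  fun τ => (1 / 2 : ℂ) * ∑ᶠ σ, (P.sgn σ τ : ℂ) * g σ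

end SgnPair

/-- The Grover structure `X` is the up graph structure at level `q` induced by the
incidence signs into level `q+1`: two oriented `q`-simplices span an edge iff their
underlying simplices are distinct up neighbors, `η^up(τ₁,τ₂) = sgn(σ,τ₁)·sgn(σ,τ₂)`
for (either orientation of) the common `(q+1)`-simplex `σ`, and `deg_X τ` is the number
of `(q+1)`-simplices containing `[τ]` as a face (each such simplex having exactly two
orientations). -/
def GroverStructure.IsUpOf {O Oup : OrientedSet} (X : GroverStructure O)
    (P : SgnPair O Oup) : Prop :=
  (∀ τ₁ τ₂ : O.K, X.eta τ₁ τ₂ ≠ 0 ↔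
      τ₁ ≠ τ₂ ∧ τ₁ ≠ O.bar τ₂ ∧ ∃ σ, P.sgn σ τ₁ ≠ 0 ∧ P.sgn σ τ₂ ≠ 0) ∧
  (∀ τ₁ τ₂ σ, τ₁ ≠ τ₂ → τ₁ ≠ O.bar τ₂ → P.sgn σ τ₁ ≠ 0 → P.sgn σ τ₂ ≠ 0 →
      X.eta τ₁ τ₂ = P.sgn σ τ₁ * P.sgn σ τ₂) ∧
  (∀ τ, (P.cofacesFinite τ).toFinset.card = 2 * X.deg τ)

/-- The Grover structure `Y` is the down graph structure at level `q+1` induced by the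
incidence signs from level `q`: two oriented `(q+1)`-simplices span an edge iff their
underlying simplices are distinct down neighbors, and
`η^down(σ₁,σ₂) = sgn(σ₁,μ)·sgn(σ₂,μ)` for (either orientation of) a common face `μ`. -/
def GroverStructure.IsDownOf {Odn O : OrientedSet} (Y : GroverStructure O)
    (P : SgnPair Odn O) : Prop :=
  (∀ σ₁ σ₂ : O.K, Y.eta σ₁ σ₂ ≠ 0 ↔
      σ₁ ≠ σ₂ ∧ σ₁ ≠ O.bar σ₂ ∧ ∃ μ, P.sgn σ₁ μ ≠ 0 ∧ P.sgn σ₂ μ ≠ 0) ∧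
  (∀ σ₁ σ₂ μ, σ₁ ≠ σ₂ → σ₁ ≠ O.bar σ₂ → P.sgn σ₁ μ ≠ 0 → P.sgn σ₂ μ ≠ 0 →
      Y.eta σ₁ σ₂ = P.sgn σ₁ μ * P.sgn σ₂ μ)

/-! If `D g = -g` for `D = d S d*`, then, `d*` being an isometry and `S` preserving the norm of
functions supported on edges, `Re ⟪d* g, S d* g⟫ = Re ⟪g, D g⟫ = -‖g‖²` forces `S d* g = -d* g`:
`c(τ) g(τ) = -η(τ,τ') c(τ') g(τ')` along every edge. An up graph has degree `2(q+1) deg_X τ`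
while `τ` has only `2 deg_X τ` oriented cofaces, so for `q ≥ 1` double counting gives a coface `σ`
of `τ` with at least three neighbours of `τ` among its faces; two of them, `τ₁` and `τ₂`, are
neither equal nor opposite, hence neighbours of each other. Around the triangle `τ τ₁ τ₂` the
signs `η = sgn(σ,·) sgn(σ,·)` multiply to `1`, so the three relations give `g(τ) = -g(τ)`. -/

open ComplexConjugate
open scoped InnerProductSpace

section FiniteRows

variable {α β M : Type*}

theorem tsum_prod_eq_tsum_sum_of_finite_rows [NormedAddCommGroup M] [CompleteSpace M]
    {F : α × β → M} (hF : Summable F) (s : α → Finset β)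
    (hs : ∀ a b, b ∉ s a → F (a, b) = 0) :
    ∑' p, F p = ∑' a, ∑ b ∈ s a, F (a, b) := by
  rw [hF.tsum_prod' fun a => summable_of_ne_finset_zero (hs a)]
  exact tsum_congr fun a => tsum_eq_sum (hs a)

theorem summable_prod_of_finite_rows {F : α × β → ℝ} (hF : 0 ≤ F) (s : α → Finset β)
    (hs : ∀ a b, b ∉ s a → F (a, b) = 0) (hrows : Summable fun a => ∑ b ∈ s a, F (a, b)) :
    Summable F := by
  refine (summable_prod_of_nonneg hF).2 ⟨fun a => summable_of_ne_finset_zero (hs a), ?_⟩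
  simpa only [tsum_eq_sum (hs _)] using hrows

end FiniteRows

theorem memℓp_two_iff {ι : Type*} {E : ι → Type*} [∀ i, NormedAddCommGroup (E i)]
    {f : ∀ i, E i} : Memℓp f 2 ↔ Summable fun i => ‖f i‖ ^ 2 := by
  rw [memℓp_gen_iff (by norm_num)]
  norm_num

theorem lp.norm_sq_eq_tsum {ι : Type*} {E : ι → Type*} [∀ i, NormedAddCommGroup (E i)]
    (f : lp E 2) : ‖f‖ ^ 2 = ∑' i, ‖f i‖ ^ 2 := by
  simpa using lp.norm_rpow_eq_tsum (p := 2) (by norm_num) f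

theorem add_eq_zero_of_re_inner_eq_neg {𝕜 E : Type*} [RCLike 𝕜] [NormedAddCommGroup E]
    [InnerProductSpace 𝕜 E] {x y : E} (hy : ‖y‖ = ‖x‖) (hxy : RCLike.re ⟪x, y⟫_𝕜 = -‖x‖ ^ 2) :
    x + y = 0 := by
  have : ‖x + y‖ ^ 2 = 0 := by rw [@norm_add_sq 𝕜, hxy, hy]; ring
  exact norm_eq_zero.1 (pow_eq_zero_iff two_ne_zero |>.1 this)

namespace GroverStructure

variable {O : OrientedSet} (Y : GroverStructure O)

noncomputable def nbhd (τ : O.K) : Finset O.K := (Y.nbhdFinite τ).toFinset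

@[simp]
theorem mem_nbhd {τ τ' : O.K} : τ' ∈ Y.nbhd τ ↔ Y.eta τ τ' ≠ 0 :=
  Set.Finite.mem_toFinset _

theorem abs_eta_of_ne_zero {τ τ' : O.K} (h : Y.eta τ τ' ≠ 0) : |Y.eta τ τ'| = 1 := by
  rcases Y.eta_vals τ τ' with h0 | h1 | h1
  · exact absurd h0 h
  all_goals rw [h1]; norm_num

theorem conj_c (τ : O.K) : conj (Y.c τ) = Y.c τ := by
  simp [c]

theorem c_ne_zero (hmult : 0 < Y.mult) (τ : O.K) : Y.c τ ≠ 0 := by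
  have := Y.deg_pos τ
  simp only [c, ne_eq, inv_eq_zero, Complex.ofReal_eq_zero]
  positivity

theorem card_nbhd_mul_norm_c_sq (hmult : 0 < Y.mult) (τ : O.K) :
    (Y.nbhd τ).card * ‖Y.c τ‖ ^ 2 = 1 := by
  have : (0 : ℝ) < Y.mult * Y.deg τ := by have := Y.deg_pos τ; positivity
  rw [nbhd, Y.nbhd_card, c, norm_inv, Complex.norm_real, Real.norm_of_nonneg (by positivity),
    inv_pow, Real.sq_sqrt this.le]
  push_cast
  exact mul_inv_cancel₀ this.ne'

variable {Y}

theorem dstar_apply_of_mem {f : O.K → ℂ} {τ τ' : O.K} (h : τ' ∈ Y.nbhd τ) :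
    Y.dstar f (τ, τ') = Y.c τ * f τ :=
  if_pos (Y.mem_nbhd.1 h)

theorem dstar_apply_of_notMem {f : O.K → ℂ} {τ τ' : O.K} (h : τ' ∉ Y.nbhd τ) :
    Y.dstar f (τ, τ') = 0 :=
  if_neg (mt Y.mem_nbhd.2 h)

variable (Y)

theorem shift_dstar_apply (f : O.K → ℂ) (p : O.K × O.K) :
    Y.shift (Y.dstar f) p = Y.eta p.1 p.2 * (Y.c p.2 * f p.2) := by
  by_cases h : Y.eta p.1 p.2 = 0
  · simp [shift, h]
  · have h' : Y.eta p.2 p.1 ≠ 0 := Y.eta_symm p.1 p.2 ▸ h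
    simp [shift, dstar, h']

theorem norm_shift_dstar (f : O.K → ℂ) (p : O.K × O.K) :
    ‖Y.shift (Y.dstar f) p‖ = ‖Y.dstar f p.swap‖ := by
  by_cases h : Y.eta p.1 p.2 = 0
  · have h' : Y.eta p.2 p.1 = 0 := Y.eta_symm p.1 p.2 ▸ h
    simp [shift_dstar_apply, dstar, h, h']
  · have h' : Y.eta p.2 p.1 ≠ 0 := Y.eta_symm p.1 p.2 ▸ h
    simp [shift_dstar_apply, dstar, h', Y.abs_eta_of_ne_zero h]

theorem disc_apply (f : O.K → ℂ) (τ : O.K) :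
    Y.disc f τ = Y.c τ * ∑ τ' ∈ Y.nbhd τ, Y.shift (Y.dstar f) (τ, τ') := by
  rw [disc, d, finsum_mem_eq_finite_toFinset_sum _ (Y.nbhdFinite τ)]
  rfl

theorem sum_norm_sq_dstar (hmult : 0 < Y.mult) (f : O.K → ℂ) (τ : O.K) :
    ∑ τ' ∈ Y.nbhd τ, ‖Y.dstar f (τ, τ')‖ ^ 2 = ‖f τ‖ ^ 2 := by
  rw [Finset.sum_congr rfl fun τ' h => by rw [dstar_apply_of_mem h], Finset.sum_const,
    nsmul_eq_mul, norm_mul, mul_pow, ← mul_assoc, Y.card_nbhd_mul_norm_c_sq hmult, one_mul]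

theorem sum_conj_dstar_mul_shift_dstar (f : O.K → ℂ) (τ : O.K) :
    ∑ τ' ∈ Y.nbhd τ, conj (Y.dstar f (τ, τ')) * Y.shift (Y.dstar f) (τ, τ')
      = conj (f τ) * Y.disc f τ := by
  rw [Y.disc_apply, Finset.mul_sum, Finset.mul_sum]
  refine Finset.sum_congr rfl fun τ' h => ?_
  rw [dstar_apply_of_mem h, map_mul, Y.conj_c]
  ring

theorem dstar_add_shift_dstar_eq_zero (hmult : 0 < Y.mult) {g : O.K → ℂ} (hg : Memℓp g 2)
    (hD : Y.disc g = -g) : Y.dstar g + Y.shift (Y.dstar g) = 0 := by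
  have hrows : ∀ τ τ', τ' ∉ Y.nbhd τ → ‖Y.dstar g (τ, τ')‖ ^ 2 = 0 := fun τ τ' h => by
    simp [dstar_apply_of_notMem h]
  have hw_sq : Summable fun p => ‖Y.dstar g p‖ ^ 2 :=
    summable_prod_of_finite_rows (fun _ => by positivity) Y.nbhd hrows
      (by simpa only [Y.sum_norm_sq_dstar hmult] using memℓp_two_iff.1 hg)
  have hw_tsum : ∑' p, ‖Y.dstar g p‖ ^ 2 = ∑' τ, ‖g τ‖ ^ 2 := by
    simp only [tsum_prod_eq_tsum_sum_of_finite_rows hw_sq Y.nbhd hrows,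
      Y.sum_norm_sq_dstar hmult]
  have hSw_sq : Summable fun p => ‖Y.shift (Y.dstar g) p‖ ^ 2 := by
    simpa only [Y.norm_shift_dstar] using hw_sq.prod_symm
  have hSw_tsum : ∑' p, ‖Y.shift (Y.dstar g) p‖ ^ 2 = ∑' τ, ‖g τ‖ ^ 2 := by
    simp only [Y.norm_shift_dstar, ← hw_tsum]
    exact (Equiv.prodComm O.K O.K).tsum_eq fun p => ‖Y.dstar g p‖ ^ 2
  obtain ⟨w, hw⟩ : ∃ w : lp (fun _ : O.K × O.K => ℂ) 2, ⇑w = Y.dstar g :=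
    ⟨⟨_, memℓp_two_iff.2 hw_sq⟩, rfl⟩
  obtain ⟨Sw, hSw⟩ : ∃ Sw : lp (fun _ : O.K × O.K => ℂ) 2, ⇑Sw = Y.shift (Y.dstar g) :=
    ⟨⟨_, memℓp_two_iff.2 hSw_sq⟩, rfl⟩
  have hnorm : ‖w‖ ^ 2 = ∑' τ, ‖g τ‖ ^ 2 := by rw [lp.norm_sq_eq_tsum, hw, hw_tsum]
  have hSnorm : ‖Sw‖ ^ 2 = ∑' τ, ‖g τ‖ ^ 2 := by rw [lp.norm_sq_eq_tsum, hSw, hSw_tsum]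
  have hinner : ⟪w, Sw⟫_ℂ = -((∑' τ, ‖g τ‖ ^ 2 : ℝ) : ℂ) := by
    have hsum : Summable fun p => ⟪w p, Sw p⟫_ℂ := lp.summable_inner w Sw
    rw [lp.inner_eq_tsum, tsum_prod_eq_tsum_sum_of_finite_rows hsum Y.nbhd
      fun τ τ' h => by rw [hw, dstar_apply_of_notMem h, inner_zero_left]]
    simp only [hw, hSw, RCLike.inner_apply', Y.sum_conj_dstar_mul_shift_dstar, hD, Pi.neg_apply,
      mul_neg, Complex.conj_mul', tsum_neg, Complex.ofReal_tsum]
    push_cast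
    rfl
  have h0 : w + Sw = 0 := by
    refine add_eq_zero_of_re_inner_eq_neg (𝕜 := ℂ) ?_ ?_
    · rw [← sq_eq_sq₀ (norm_nonneg _) (norm_nonneg _), hnorm, hSnorm]
    · rw [hinner, hnorm]
      simp
  rw [← hSw, ← hw, ← lp.coeFn_add, h0, lp.coeFn_zero]

end GroverStructure

theorem SgnPair.sgn_sq_of_ne_zero {Olow Ohigh : OrientedSet} (P : SgnPair Olow Ohigh)
    {σ : Ohigh.K} {τ : Olow.K} (h : P.sgn σ τ ≠ 0) : P.sgn σ τ ^ 2 = 1 := by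
  rcases P.sgn_vals σ τ with h0 | h1 | h1
  · exact absurd h0 h
  all_goals rw [h1]; norm_num

namespace GroverStructure.IsUpOf

variable {O Oup : OrientedSet} {X : GroverStructure O} {P : SgnPair O Oup}

theorem eta_eq_sgn_mul_sgn (hX : X.IsUpOf P) {τ₁ τ₂ : O.K} {σ : Oup.K} (h : X.eta τ₁ τ₂ ≠ 0)
    (h₁ : P.sgn σ τ₁ ≠ 0) (h₂ : P.sgn σ τ₂ ≠ 0) : X.eta τ₁ τ₂ = P.sgn σ τ₁ * P.sgn σ τ₂ := by
  obtain ⟨hne, hnb, -⟩ := (hX.1 τ₁ τ₂).1 h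
  exact hX.2.1 τ₁ τ₂ σ hne hnb h₁ h₂

theorem exists_coface_two_lt_card_nbhd_faces (hX : X.IsUpOf P) (hmult : 2 < X.mult) (τ : O.K) :
    ∃ σ, P.sgn σ τ ≠ 0 ∧ 2 < ((X.nbhd τ).filter fun τ' => P.sgn σ τ' ≠ 0).card := by
  classical
  by_contra! h
  -- each neighbour of `τ` is a face of both orientations of some coface of `τ`
  have hdouble := Finset.card_mul_le_card_mul (fun τ' σ => P.sgn σ τ' ≠ 0)
    (s := X.nbhd τ) (t := (P.cofacesFinite τ).toFinset) (m := 2) (n := 2)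
    (fun τ' hτ' => by
      obtain ⟨-, -, σ, hσ, hσ'⟩ := (hX.1 τ τ').1 (X.mem_nbhd.1 hτ')
      rw [← Finset.card_pair (Oup.bar_ne σ).symm]
      refine Finset.card_le_card fun σ' hσ' => ?_
      simp only [Finset.mem_insert, Finset.mem_singleton] at hσ'
      rcases hσ' with rfl | rfl <;> simp [P.sgn_bar_left, *])
    (fun σ hσ => h σ (by simpa using hσ))
  rw [nbhd, X.nbhd_card, hX.2.2 τ] at hdouble
  have := X.deg_pos τ
  nlinarith

theorem exists_triangle (hX : X.IsUpOf P) (hmult : 2 < X.mult) (τ₀ : O.K) :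
    ∃ σ τ₁ τ₂, P.sgn σ τ₀ ≠ 0 ∧ P.sgn σ τ₁ ≠ 0 ∧ P.sgn σ τ₂ ≠ 0 ∧
      X.eta τ₀ τ₁ ≠ 0 ∧ X.eta τ₀ τ₂ ≠ 0 ∧ X.eta τ₁ τ₂ ≠ 0 := by
  classical
  obtain ⟨σ, hσ, hcard⟩ := hX.exists_coface_two_lt_card_nbhd_faces hmult τ₀
  set F := (X.nbhd τ₀).filter fun τ' => P.sgn σ τ' ≠ 0
  obtain ⟨τ₁, hτ₁⟩ := Finset.card_pos.1 (by omega : 0 < F.card)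
  have hrest : 0 < (F \ {τ₁, O.bar τ₁}).card := by
    have := Finset.le_card_sdiff {τ₁, O.bar τ₁} F
    have := Finset.card_le_two (a := τ₁) (b := O.bar τ₁)
    omega
  obtain ⟨τ₂, hτ₂⟩ := Finset.card_pos.1 hrest
  simp only [F, Finset.mem_sdiff, Finset.mem_filter, X.mem_nbhd, Finset.mem_insert,
    Finset.mem_singleton, not_or] at hτ₁ hτ₂
  obtain ⟨⟨h₀₂, h₂⟩, hne, hnb⟩ := hτ₂
  have h₁₂ : X.eta τ₁ τ₂ ≠ 0 := (hX.1 τ₁ τ₂).2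
    ⟨Ne.symm hne, fun h => hnb (by rw [h, O.bar_invol]), σ, hτ₁.2, h₂⟩
  exact ⟨σ, τ₁, τ₂, hσ, hτ₁.2, h₂, hτ₁.1, h₀₂, h₁₂⟩

theorem eq_zero_of_edge_relation (hX : X.IsUpOf P) (hmult : 2 < X.mult) {v : O.K → ℂ}
    (hv : ∀ τ τ', X.eta τ τ' ≠ 0 → v τ + X.eta τ τ' * v τ' = 0) : v = 0 := by
  funext τ₀
  obtain ⟨σ, τ₁, τ₂, h₀, h₁, h₂, h₀₁, h₀₂, h₁₂⟩ := hX.exists_triangle hmult τ₀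
  have r₀₁ := hv _ _ h₀₁
  have r₀₂ := hv _ _ h₀₂
  have r₁₂ := hv _ _ h₁₂
  rw [hX.eta_eq_sgn_mul_sgn h₀₁ h₀ h₁] at r₀₁
  rw [hX.eta_eq_sgn_mul_sgn h₀₂ h₀ h₂] at r₀₂
  rw [hX.eta_eq_sgn_mul_sgn h₁₂ h₁ h₂] at r₁₂
  have hs₁ : (P.sgn σ τ₁ : ℂ) ^ 2 = 1 := by exact_mod_cast P.sgn_sq_of_ne_zero h₁
  push_cast at r₀₁ r₀₂ r₁₂
  have : 2 * v τ₀ = 0 := by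
    linear_combination r₀₁ + r₀₂ - (P.sgn σ τ₀ * P.sgn σ τ₁ : ℂ) * r₁₂
      + (P.sgn σ τ₀ * P.sgn σ τ₂ * v τ₂ : ℂ) * hs₁
  simpa using this

end GroverStructure.IsUpOf

/-- For `q ≥ 1`, the up discriminant `D_q^up` does not have `−1`
as an eigenvalue. -/
theorem disc_up_has_no_eigenvalue_neg_one (q : ℕ) (hq : 1 ≤ q)
    (O Oup : OrientedSet) (P : SgnPair O Oup)
    (X : GroverStructure O) (hXm : X.mult = 2 * (q + 1)) (hX : X.IsUpOf P) :
    ¬ ∃ g : O.K → ℂ, Memℓp g 2 ∧ g ≠ 0 ∧ X.disc g = fun τ => - g τ := by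
  rintro ⟨g, hg, hg0, hD⟩
  have hmult : 2 < X.mult := by omega
  have hS := X.dstar_add_shift_dstar_eq_zero (by omega) hg hD
  have hv : ∀ τ τ', X.eta τ τ' ≠ 0 → X.c τ * g τ + X.eta τ τ' * (X.c τ' * g τ') = 0 :=
    fun τ τ' h => by
      simpa [X.shift_dstar_apply, X.dstar_apply_of_mem (X.mem_nbhd.2 h)] using congrFun hS (τ, τ')
  refine hg0 (funext fun τ => ?_)
  have := congrFun (hX.eq_zero_of_edge_relation hmult hv) τ
  exact (mul_eq_zero.1 this).resolve_left (X.c_ne_zero (by omega) τ)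
end
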